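/- (Label-noise dual, one direction) Fix α ∈ (0,1]. For any g ∈ [−1,1]^n and any σ ≥ 0 in ℝ^p, and any z with −α·1 ≤ z ≤ α·1 and (1/n) F z ≥ b, we have (1/n)⟨z, g⟩ ≥ ⟨b, σ⟩ − (α/n)‖F^⊤σ − g‖_1 ... in particular taking g = g(σ) (the clipped prediction) gives (1/n)⟨z, g(σ)⟩ ≥ ⟨b, σ⟩ − (α/n) Σ_j max(0, |⟨x_j, σ⟩| − 1). -/

import Mathlib

open Matrix

section WeakDuality

variable {R m n : Type*} [CommRing R] [LinearOrder R] [IsStrictOrderedRing R] [Fintype m] [Fintype n]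

theorem dotProduct_le_mul_sum_abs {z : n → R} {α : R} (hz : ∀ j, |z j| ≤ α) (v : n → R) :
    z ⬝ᵥ v ≤ α * ∑ j, |v j| := by
  rw [dotProduct, Finset.mul_sum]
  refine Finset.sum_le_sum fun j _ => ?_
  calc z j * v j ≤ |z j| * |v j| := abs_mul (z j) (v j) ▸ le_abs_self _
    _ ≤ α * |v j| := by gcongr; exact hz j

theorem dotProduct_sub_le_mul_dotProduct_of_le_smul_mulVec (F : Matrix m n R) {b σ : m → R} {z : n → R} {c α : R}
    (hc : 0 ≤ c) (hσ : 0 ≤ σ) (hz : ∀ j, |z j| ≤ α) (hzb : b ≤ c • F *ᵥ z) (g : n → R) :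
    b ⬝ᵥ σ - α * c * ∑ j, |(Fᵀ *ᵥ σ) j - g j| ≤ c * (z ⬝ᵥ g) := by
  have hprimal : b ⬝ᵥ σ ≤ c * (z ⬝ᵥ Fᵀ *ᵥ σ) :=
    calc b ⬝ᵥ σ ≤ (c • F *ᵥ z) ⬝ᵥ σ := dotProduct_le_dotProduct_of_nonneg_right hzb hσ
      _ = c * (z ⬝ᵥ Fᵀ *ᵥ σ) := by
        rw [smul_dotProduct, dotProduct_comm, dotProduct_mulVec, mulVec_transpose,
          dotProduct_comm, smul_eq_mul]
  have hresidual : z ⬝ᵥ (Fᵀ *ᵥ σ - g) ≤ α * ∑ j, |(Fᵀ *ᵥ σ) j - g j| :=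
    dotProduct_le_mul_sum_abs hz _
  rw [dotProduct_sub] at hresidual
  have := mul_le_mul_of_nonneg_left hresidual hc
  linarith

end WeakDuality

noncomputable def clip (t : ℝ) : ℝ := if |t| < 1 then t else Real.sign t

theorem abs_sub_clip (t : ℝ) : |t - clip t| = max 0 (|t| - 1) := by
  unfold clip
  split_ifs with ht
  · simp [ht.le]
  · rcases lt_or_gt_of_ne (show t ≠ 0 by rintro rfl; norm_num at ht) with hneg | hpos
    · rw [abs_of_neg hneg] at ht ⊢
      rw [Real.sign_of_neg hneg, abs_of_nonpos (by linarith),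
        max_eq_right (by linarith)]
      ring
    · rw [abs_of_pos hpos] at ht ⊢
      rw [Real.sign_of_pos hpos, abs_of_nonneg (by linarith),
        max_eq_right (by linarith)]

theorem label_noise_weak_duality_general (n p : ℕ)
    (F : Fin p → Fin n → ℝ)
    (b : Fin p → ℝ) (α : ℝ)
    (σ : Fin p → ℝ) (hσ : ∀ i, 0 ≤ σ i)
    (z : Fin n → ℝ) (hz : ∀ j, |z j| ≤ α)
    (hzb : ∀ i, b i ≤ (1 / (n : ℝ)) * ∑ j, F i j * z j) :
    (∀ g : Fin n → ℝ, (∀ j, -1 ≤ g j ∧ g j ≤ 1) →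
      (1 / (n : ℝ)) * ∑ j, z j * g j ≥
        (∑ i, b i * σ i) - (α / (n : ℝ)) * ∑ j, |(∑ i, F i j * σ i) - g j|) ∧
    (∀ g : Fin n → ℝ,
      (∀ j, g j = if |∑ i, F i j * σ i| < 1 then ∑ i, F i j * σ i
          else Real.sign (∑ i, F i j * σ i)) →
      (1 / (n : ℝ)) * ∑ j, z j * g j ≥
        (∑ i, b i * σ i) - (α / (n : ℝ)) * ∑ j, max 0 (|∑ i, F i j * σ i| - 1)) := by
  have hduality (g : Fin n → ℝ) :
      (1 / (n : ℝ)) * ∑ j, z j * g j ≥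
        (∑ i, b i * σ i) - (α / (n : ℝ)) * ∑ j, |(∑ i, F i j * σ i) - g j| := by
    rw [div_eq_mul_one_div α]
    exact dotProduct_sub_le_mul_dotProduct_of_le_smul_mulVec (Matrix.of F) (by positivity) hσ hz hzb g
  refine ⟨fun g _ => hduality g, fun g hg => ?_⟩
  have hclip : ∑ j, |(∑ i, F i j * σ i) - g j| = ∑ j, max 0 (|∑ i, F i j * σ i| - 1) :=
    Finset.sum_congr rfl fun j _ => hg j ▸ abs_sub_clip _
  exact hclip ▸ hduality g

theorem label_noise_weak_duality (n p : ℕ) (hn : 0 < n)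
    (F : Fin p → Fin n → ℝ) (hF : ∀ i j, |F i j| ≤ 1)
    (b : Fin p → ℝ) (α : ℝ) (hα0 : 0 < α) (hα1 : α ≤ 1)
    (σ : Fin p → ℝ) (hσ : ∀ i, 0 ≤ σ i)
    (z : Fin n → ℝ) (hz : ∀ j, |z j| ≤ α)
    (hzb : ∀ i, b i ≤ (1 / (n : ℝ)) * ∑ j, F i j * z j) :
    (∀ g : Fin n → ℝ, (∀ j, -1 ≤ g j ∧ g j ≤ 1) →
      (1 / (n : ℝ)) * ∑ j, z j * g j ≥
        (∑ i, b i * σ i) - (α / (n : ℝ)) * ∑ j, |(∑ i, F i j * σ i) - g j|) ∧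
    (∀ g : Fin n → ℝ,
      (∀ j, g j = if |∑ i, F i j * σ i| < 1 then ∑ i, F i j * σ i
          else Real.sign (∑ i, F i j * σ i)) →
      (1 / (n : ℝ)) * ∑ j, z j * g j ≥
        (∑ i, b i * σ i) - (α / (n : ℝ)) * ∑ j, max 0 (|∑ i, F i j * σ i| - 1)) :=
  label_noise_weak_duality_general n p F b α σ hσ z hz hzb
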